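/- Let d₀ ≥ 2 and let (t⁻, t⁺)₊ ⊂ ℝ/ℤ be an open arc of length d₀^{-ℓ} for some ℓ ≥ 1. Then the set T := { t ∈ ℝ/ℤ : τ_{d₀}^n(t) ∉ (t⁻, t⁺)₊ for all n ≥ 0 } is a nonempty closed set that is forward invariant under τ_{d₀} (i.e., τ_{d₀}(T) ⊆ T). -/

import Mathlib

/-!
An open arc of length at most `1/d₀` cannot contain two points at distance exactly `1/d₀`,
so every angle has a `τ_{d₀}`-preimage outside the arc. Pulling back repeatedly gives, for
every `n`, an angle whose first `n` iterates avoid the arc; these finite-stage sets are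
closed and nested, so by compactness of the circle their intersection `T` is nonempty.
-/

open Set Function

section OrbitAvoiding

variable {X : Type*} (f : X → X) (U : Set X)

def orbitAvoiding : Set X := {x | ∀ n, f^[n] x ∉ U}

theorem orbitAvoiding_eq_iInter : orbitAvoiding f U = ⋂ n, f^[n] ⁻¹' Uᶜ := by
  ext x; simp [orbitAvoiding]

theorem mapsTo_orbitAvoiding : MapsTo f (orbitAvoiding f U) (orbitAvoiding f U) :=
  fun x hx n => by simpa only [← iterate_succ_apply] using hx (n + 1)

variable {f U}

theorem exists_forall_le_iterate_notMem (hpre : ∀ y, ∃ x ∉ U, f x = y) [Nonempty X] (n : ℕ) :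
    ∃ x, ∀ j ≤ n, f^[j] x ∉ U := by
  induction n with
  | zero =>
    obtain ⟨x, hxU, -⟩ := hpre (Classical.arbitrary X)
    exact ⟨x, fun j hj => by simpa [Nat.le_zero.mp hj] using hxU⟩
  | succ n ih =>
    obtain ⟨y, hy⟩ := ih
    obtain ⟨x, hxU, rfl⟩ := hpre y
    refine ⟨x, fun j hj => ?_⟩
    cases j with
    | zero => simpa using hxU
    | succ j => simpa only [iterate_succ_apply] using hy j (by omega)

variable [TopologicalSpace X]

theorem isClosed_orbitAvoiding (hf : Continuous f) (hU : IsOpen U) :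
    IsClosed (orbitAvoiding f U) := by
  rw [orbitAvoiding_eq_iInter]
  exact isClosed_iInter fun n => hU.isClosed_compl.preimage (hf.iterate n)

theorem orbitAvoiding_nonempty [CompactSpace X] [Nonempty X] (hf : Continuous f) (hU : IsOpen U)
    (hpre : ∀ y, ∃ x ∉ U, f x = y) : (orbitAvoiding f U).Nonempty := by
  set V : ℕ → Set X := fun n => ⋂ j ≤ n, f^[j] ⁻¹' Uᶜ
  have hV_closed : ∀ n, IsClosed (V n) := fun n =>
    isClosed_biInter fun j _ => hU.isClosed_compl.preimage (hf.iterate j)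
  have hV_nonempty : ∀ n, (V n).Nonempty := fun n => by
    simpa [V] using exists_forall_le_iterate_notMem hpre n
  have hV_anti : ∀ n, V (n + 1) ⊆ V n := fun n =>
    biInter_subset_biInter_left fun j hj => Nat.le_succ_of_le hj
  obtain ⟨x, hx⟩ := IsCompact.nonempty_iInter_of_sequence_nonempty_isCompact_isClosed V hV_anti
    hV_nonempty (hV_closed 0).isCompact hV_closed
  refine ⟨x, fun n => ?_⟩
  have hxn := mem_iInter.mp hx n
  simp only [V, mem_iInter] at hxn
  exact hxn n le_rfl

end OrbitAvoiding

namespace UnitAddCircle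

theorem coe_add_notMem_image_Ioo {a ε s x : ℝ} (hεs : ε ≤ s) (hs : s ≤ 1 - ε)
    (hx : (x : UnitAddCircle) ∈ (fun x : ℝ => (x : UnitAddCircle)) '' Ioo a (a + ε)) :
    ((x + s : ℝ) : UnitAddCircle) ∉ (fun x : ℝ => (x : UnitAddCircle)) '' Ioo a (a + ε) := by
  rintro ⟨v, hv, hvx⟩
  obtain ⟨u, hu, hux⟩ := hx
  obtain ⟨k, hk⟩ : ∃ k : ℤ, k • (1 : ℝ) = v - u - s := by
    rw [← AddCircle.coe_eq_zero_iff]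
    simp only [AddCircle.coe_sub, hvx, hux, AddCircle.coe_add]
    abel
  simp only [zsmul_eq_mul, mul_one] at hk
  simp only [mem_Ioo] at hu hv
  have hk_neg : (k : ℝ) < 0 := by linarith
  have hk_gt : (-1 : ℝ) < k := by linarith
  norm_cast at hk_neg hk_gt
  omega

theorem exists_nsmul_eq_notMem_image_Ioo {d : ℕ} (hd : 2 ≤ d) {a ε : ℝ} (hε : ε ≤ 1 / d)
    (y : UnitAddCircle) :
    ∃ x ∉ (fun x : ℝ => (x : UnitAddCircle)) '' Ioo a (a + ε), d • x = y := by
  obtain ⟨r, rfl⟩ := QuotientAddGroup.mk_surjective y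
  have hd_pos : (0 : ℝ) < d := by positivity
  have hd_two : (2 : ℝ) ≤ d := by exact_mod_cast hd
  have hlift : ∀ m : ℤ, d • (((r + m) / d : ℝ) : UnitAddCircle) = (r : UnitAddCircle) := by
    intro m
    rw [← AddCircle.coe_nsmul, nsmul_eq_mul, mul_div_cancel₀ _ hd_pos.ne', AddCircle.coe_add,
      (AddCircle.coe_eq_zero_iff 1 (x := (m : ℝ))).2 ⟨m, by simp⟩, add_zero]
  by_cases h₀ : (((r + (0 : ℤ)) / d : ℝ) : UnitAddCircle) ∈
      (fun x : ℝ => (x : UnitAddCircle)) '' Ioo a (a + ε)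
  · refine ⟨_, ?_, hlift 1⟩
    have hshift : (r + (1 : ℤ)) / (d : ℝ) = (r + (0 : ℤ)) / d + 1 / d := by
      push_cast; ring
    rw [hshift]
    refine coe_add_notMem_image_Ioo hε ?_ h₀
    have : 1 / (d : ℝ) ≤ 1 / 2 := one_div_le_one_div_of_le two_pos hd_two
    linarith
  · exact ⟨_, h₀, hlift 0⟩

end UnitAddCircle

/-- For `d₀ ≥ 2` and an open arc `(t⁻,t⁺)₊` of length `d₀^{-ℓ}` (`ℓ ≥ 1`), the set
`T` of angles whose forward `τ_{d₀}`-orbit avoids the arc is nonempty, closed, and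
forward invariant. -/
theorem stmt2 (d₀ : ℕ) (hd : 2 ≤ d₀) (ℓ : ℕ) (hℓ : 1 ≤ ℓ) (tm : ℝ)
    (I : Set UnitAddCircle)
    (hI : I = (fun x : ℝ => (x : UnitAddCircle)) '' Set.Ioo tm (tm + 1 / (d₀ : ℝ) ^ ℓ))
    (T : Set UnitAddCircle)
    (hT : T = {t | ∀ n : ℕ, (d₀ ^ n) • t ∉ I}) :
    T.Nonempty ∧ IsClosed T ∧ ∀ t ∈ T, d₀ • t ∈ T := by
  have hT_orbit : T = orbitAvoiding (d₀ • ·) I := by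
    simp only [hT, orbitAvoiding, smul_iterate]
  have hlen : 1 / (d₀ : ℝ) ^ ℓ ≤ 1 / d₀ := by
    gcongr
    exact le_self_pow₀ (by exact_mod_cast (by omega : 1 ≤ d₀)) (by omega)
  have hI_open : IsOpen I := hI ▸ QuotientAddGroup.isOpenMap_coe _ isOpen_Ioo
  have hcont : Continuous (d₀ • · : UnitAddCircle → UnitAddCircle) := continuous_const_smul _
  rw [hT_orbit]
  exact ⟨orbitAvoiding_nonempty hcont hI_open
      (hI ▸ UnitAddCircle.exists_nsmul_eq_notMem_image_Ioo hd hlen),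
    isClosed_orbitAvoiding hcont hI_open, mapsTo_orbitAvoiding _ _⟩
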